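/- arXiv:1509.08287 — 2 statements merged into one kernel-verified Lean document; each statement's English description precedes it below -/
import Mathlib

section
/- Let σ be a measurable function on a domain Ω ⊂ ℝ^d (d ≥ 1) satisfying the admissibility assumptions for σ-rearrangements, and assume that B_σ(μ) = ∫_{{x : a_σ(σ(x)) < μ}} σ(x) dx is finite for every μ ∈ [0, meas(Ω)). Then the function B_σ is convex on [0, meas(Ω)). -/
open MeasureTheory Set Filter Metric
open scoped ENNReal NNReal

noncomputable section

/-- The distribution function `μ_q(t) = meas {x ∈ Ω : q x > t}` of a function `q` on `Ω`. -/
def distFun {d : ℕ} (Ω : Set (EuclideanSpace ℝ (Fin d))) (q : EuclideanSpace ℝ (Fin d) → ℝ)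
    (t : ℝ) : ℝ≥0∞ :=
  volume {x | x ∈ Ω ∧ t < q x}

/-- The pseudo-inverse `q♯(s) = inf {t ≥ 0 : μ_q(t) ≤ s}` of the distribution function. -/
def pseudoInv {d : ℕ} (Ω : Set (EuclideanSpace ℝ (Fin d))) (q : EuclideanSpace ℝ (Fin d) → ℝ)
    (s : ℝ≥0∞) : ℝ :=
  sInf {t : ℝ | 0 ≤ t ∧ distFun Ω q t ≤ s}

/-- The Schwarz rearrangement of `q` on `Ω`: `q*(x) = q♯(meas (B(0,|x|) ∩ Ω))`. -/
def schwarzRearr {d : ℕ} (Ω : Set (EuclideanSpace ℝ (Fin d))) (q : EuclideanSpace ℝ (Fin d) → ℝ)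
    (x : EuclideanSpace ℝ (Fin d)) : ℝ :=
  pseudoInv Ω q (volume (Metric.ball (0 : EuclideanSpace ℝ (Fin d)) ‖x‖ ∩ Ω))

/-- The Jacobian `a_σ(e) = meas {x ∈ Ω : σ x < e}`, with extended-real argument. -/
def aSig {d : ℕ} (Ω : Set (EuclideanSpace ℝ (Fin d))) (σ : EuclideanSpace ℝ (Fin d) → ℝ)
    (e : EReal) : ℝ≥0∞ :=
  volume {x | x ∈ Ω ∧ (σ x : EReal) < e}

/-- `e_max = sup {e : a_σ(e) < meas Ω}`. -/
def eMax {d : ℕ} (Ω : Set (EuclideanSpace ℝ (Fin d))) (σ : EuclideanSpace ℝ (Fin d) → ℝ) :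
    EReal :=
  sSup {e : EReal | aSig Ω σ e < volume Ω}

/-- `e_min = ess inf σ` on `Ω`. -/
def eMin {d : ℕ} (Ω : Set (EuclideanSpace ℝ (Fin d))) (σ : EuclideanSpace ℝ (Fin d) → ℝ) :
    EReal :=
  essInf (fun x => (σ x : EReal)) (volume.restrict Ω)

/-- The admissibility assumptions on `σ` from Definition 1. -/
structure SigAdmissible {d : ℕ} (Ω : Set (EuclideanSpace ℝ (Fin d)))
    (σ : EuclideanSpace ℝ (Fin d) → ℝ) : Prop where
  dim_pos : 1 ≤ d
  measurableSet_Ω : MeasurableSet Ω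
  measurable_σ : Measurable σ
  exists_lt : ∃ e : ℝ, aSig Ω σ (e : EReal) < volume Ω
  eMin_lt_eMax : eMin Ω σ < eMax Ω σ
  levelSets : ∀ e : ℝ, (e : EReal) < eMax Ω σ → volume {x | x ∈ Ω ∧ σ x = e} = 0
  tendsto_eMax :
    Tendsto (fun e : ℝ => aSig Ω σ (e : EReal))
      (comap (fun e : ℝ => (e : EReal)) (nhdsWithin (eMax Ω σ) (Iio (eMax Ω σ))))
      (nhds (volume Ω))

/-- The σ-rearrangement `q^{*σ}(x) = q♯(a_σ(σ x)) · 1_{σ x < e_max}`. -/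
def sigRearr {d : ℕ} (Ω : Set (EuclideanSpace ℝ (Fin d))) (σ q : EuclideanSpace ℝ (Fin d) → ℝ)
    (x : EuclideanSpace ℝ (Fin d)) : ℝ :=
  if (σ x : EReal) < eMax Ω σ then pseudoInv Ω q (aSig Ω σ (σ x : EReal)) else 0

end

noncomputable section

/-- The pseudo-inverse `b_σ(μ) = sup {t < e_max : a_σ(t) ≤ μ}` of `a_σ`
(equal to `⊥ = -∞` if the set is empty). -/
def bSig {d : ℕ} (Ω : Set (EuclideanSpace ℝ (Fin d))) (σ : EuclideanSpace ℝ (Fin d) → ℝ)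
    (μ : ℝ≥0∞) : EReal :=
  sSup {t : EReal | t < eMax Ω σ ∧ aSig Ω σ t ≤ μ}

/-- `B_σ(μ) = ∫_{a_σ(σ(x)) < μ} σ(x) dx`, for a real argument `μ`. -/
def BSig {d : ℕ} (Ω : Set (EuclideanSpace ℝ (Fin d))) (σ : EuclideanSpace ℝ (Fin d) → ℝ)
    (μ : ℝ) : ℝ :=
  ∫ x in {x | x ∈ Ω ∧ aSig Ω σ (σ x : EReal) < ENNReal.ofReal μ}, σ x

/-- Finiteness of `B_σ(μ)` for all `μ ∈ [0, meas Ω)`, expressed as integrability of `σ`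
on the corresponding sublevel sets. -/
def BSigFinite {d : ℕ} (Ω : Set (EuclideanSpace ℝ (Fin d)))
    (σ : EuclideanSpace ℝ (Fin d) → ℝ) : Prop :=
  ∀ μ : ℝ, 0 ≤ μ → ENNReal.ofReal μ < volume Ω →
    MeasureTheory.IntegrableOn σ {x | x ∈ Ω ∧ aSig Ω σ (σ x : EReal) < ENNReal.ofReal μ}

/-- `H_σ(μ) = inf_{0 < s ≤ μ} (B_σ(μ+s) + B_σ(μ-s) - 2B_σ(μ))/s²`. -/
def HSig {d : ℕ} (Ω : Set (EuclideanSpace ℝ (Fin d))) (σ : EuclideanSpace ℝ (Fin d) → ℝ)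
    (μ : ℝ) : ℝ :=
  sInf ((fun s => (BSig Ω σ (μ + s) + BSig Ω σ (μ - s) - 2 * BSig Ω σ μ) / s ^ 2) '' Ioc 0 μ)

/-- `K(q*, σ) = 4 ∫₀^{‖q‖_∞} dt / H_σ(μ_q(t))` (the integrand vanishes for `t ≥ ‖q‖_∞`). -/
def Kconst {d : ℕ} (Ω : Set (EuclideanSpace ℝ (Fin d))) (σ q : EuclideanSpace ℝ (Fin d) → ℝ) :
    ℝ≥0∞ :=
  4 * ∫⁻ t in Ioi (0 : ℝ), ENNReal.ofReal ((HSig Ω σ ((distFun Ω q t).toReal))⁻¹)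

/-- `β_{f,g}(s) = meas {x ∈ Ω : f x ≤ s < g x}`. -/
def betaFun {d : ℕ} (Ω : Set (EuclideanSpace ℝ (Fin d))) (f g : EuclideanSpace ℝ (Fin d) → ℝ)
    (s : ℝ) : ℝ≥0∞ :=
  volume {x | x ∈ Ω ∧ f x ≤ s ∧ s < g x}

end

/-! For `0 < m < meas Ω` let `c = sup {e : a_σ(e) < m}`. Then `{x ∈ Ω : a_σ(σ x) < m}` lies
between `{σ < c}` and `{σ ≤ c}`, and since `a_σ` is left continuous, right continuous below `e_max`
(the level sets there are null) and `c < e_max`, it has measure exactly `m = a_σ(c)`. So for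
`x < y < z` in `[0, meas Ω)`, `B_σ(y) - B_σ(x)` integrates `σ ≤ c` over a set of measure `y - x`
and `B_σ(z) - B_σ(y)` integrates `σ ≥ c` over a set of measure `z - y`: the slopes of `B_σ`
increase. -/

open Topology

section SetIntegral

variable {α : Type*} [MeasurableSpace α] {ν : Measure α} {f : α → ℝ} {s t : Set α} {c : ℝ}

theorem setIntegral_sub_le_mul_of_le (hst : s ⊆ t) (hs : MeasurableSet s) (ht : MeasurableSet t)
    (hνt : ν t ≠ ∞) (hf : IntegrableOn f t ν) (h : ∀ x ∈ t \ s, f x ≤ c) :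
    ∫ x in t, f x ∂ν - ∫ x in s, f x ∂ν ≤ c * ν.real (t \ s) := by
  have hνts : ν (t \ s) ≠ ∞ := measure_ne_top_of_subset sdiff_subset hνt
  rw [← setIntegral_sdiff hs hf hst, mul_comm, ← smul_eq_mul, ← setIntegral_const]
  exact setIntegral_mono_on (hf.mono_set sdiff_subset) (integrableOn_const hνts) (ht.diff hs) h

theorem mul_le_setIntegral_sub_of_le (hst : s ⊆ t) (hs : MeasurableSet s) (ht : MeasurableSet t)
    (hνt : ν t ≠ ∞) (hf : IntegrableOn f t ν) (h : ∀ x ∈ t \ s, c ≤ f x) :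
    c * ν.real (t \ s) ≤ ∫ x in t, f x ∂ν - ∫ x in s, f x ∂ν := by
  rw [← setIntegral_sdiff hs hf hst]
  exact setIntegral_ge_of_const_le_real (ht.diff hs)
    (measure_ne_top_of_subset sdiff_subset hνt) h (hf.mono_set sdiff_subset)

end SetIntegral

section Rearrangement

variable {d : ℕ} {Ω : Set (EuclideanSpace ℝ (Fin d))} {σ : EuclideanSpace ℝ (Fin d) → ℝ}

theorem aSig_coe (e : ℝ) : aSig Ω σ e = volume {x | x ∈ Ω ∧ σ x < e} := by
  simp only [aSig, EReal.coe_lt_coe_iff]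

theorem monotone_setOf_lt : Monotone fun e : ℝ ↦ {x | x ∈ Ω ∧ σ x < e} :=
  fun _ _ hab _ hx ↦ ⟨hx.1, hx.2.trans_le hab⟩

theorem monotone_aSig_coe : Monotone fun e : ℝ ↦ aSig Ω σ e :=
  fun _ _ hab ↦ measure_mono fun _ hx ↦ ⟨hx.1, hx.2.trans_le (EReal.coe_le_coe_iff.2 hab)⟩

theorem aSig_le_of_forall_lt {c : ℝ} {m : ℝ≥0∞} (h : ∀ e : ℝ, e < c → aSig Ω σ e ≤ m) :
    aSig Ω σ c ≤ m := by
  have hunion : ⋃ e : Iio c, {x | x ∈ Ω ∧ σ x < e} = {x | x ∈ Ω ∧ σ x < c} := by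
    ext x
    simp only [mem_iUnion, mem_ofPred_eq, Subtype.exists, mem_Iio, exists_prop]
    refine ⟨fun ⟨e, hec, hx, hxe⟩ ↦ ⟨hx, hxe.trans hec⟩, fun ⟨hx, hxc⟩ ↦ ?_⟩
    obtain ⟨e, hxe, hec⟩ := exists_between hxc
    exact ⟨e, hec, hx, hxe⟩
  have hmono : Monotone fun e : Iio c ↦ {x | x ∈ Ω ∧ σ x < e} :=
    monotone_setOf_lt.comp (Subtype.mono_coe _)
  rw [aSig_coe, ← hunion, hmono.measure_iUnion]
  exact iSup_le fun e ↦ (aSig_coe (Ω := Ω) (σ := σ) e) ▸ h e e.2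

theorem exists_gt_aSig_lt_volume {c : ℝ} (hc : (c : EReal) < eMax Ω σ) :
    ∃ e : ℝ, c < e ∧ aSig Ω σ e < volume Ω := by
  obtain ⟨t, ht, hct⟩ := lt_sSup_iff.1 hc
  induction t using EReal.rec with
  | bot => exact absurd hct not_lt_bot
  | coe e => exact ⟨e, EReal.coe_lt_coe_iff.1 hct, ht⟩
  | top =>
    have hle : volume Ω ≤ aSig Ω σ ⊤ := measure_mono fun x hx ↦ ⟨hx, EReal.coe_lt_top _⟩
    exact absurd ht hle.not_gt

theorem bddAbove_setOf_aSig_lt {m : ℝ≥0∞} (hm : m < volume Ω) :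
    BddAbove {e : ℝ | aSig Ω σ e < m} := by
  have hunion : ⋃ e : ℝ, {x | x ∈ Ω ∧ σ x < e} = Ω := by
    ext x
    simp only [mem_iUnion]
    exact ⟨fun ⟨_, hx⟩ ↦ hx.1, fun hx ↦ ⟨σ x + 1, hx, lt_add_one _⟩⟩
  have hlim : Tendsto (fun e : ℝ ↦ aSig Ω σ e) atTop (𝓝 (volume Ω)) := by
    simpa only [aSig_coe, hunion, Function.comp_def] using
      tendsto_measure_iUnion_atTop (μ := volume) (monotone_setOf_lt (Ω := Ω) (σ := σ))
  obtain ⟨e₁, he₁⟩ := (hlim.eventually_const_lt hm).exists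
  exact ⟨e₁, fun e he ↦ not_lt.1 fun h ↦ (he₁.trans_le (monotone_aSig_coe h.le)).not_gt he⟩

-- `BSig Ω σ μ` is by definition `∫ x in sigSublevel Ω σ (ENNReal.ofReal μ), σ x`.
def sigSublevel (Ω : Set (EuclideanSpace ℝ (Fin d))) (σ : EuclideanSpace ℝ (Fin d) → ℝ)
    (m : ℝ≥0∞) : Set (EuclideanSpace ℝ (Fin d)) :=
  {x | x ∈ Ω ∧ aSig Ω σ (σ x) < m}

theorem sigSublevel_mono : Monotone (sigSublevel Ω σ) :=
  fun _ _ hmn _ hx ↦ ⟨hx.1, hx.2.trans_le hmn⟩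

namespace SigAdmissible

theorem measurableSet_setOf_lt (hσ : SigAdmissible Ω σ) (e : ℝ) :
    MeasurableSet {x | x ∈ Ω ∧ σ x < e} :=
  hσ.measurableSet_Ω.inter (hσ.measurable_σ measurableSet_Iio)

theorem coe_lt_eMax (hσ : SigAdmissible Ω σ) {c : ℝ} (hc : aSig Ω σ c < volume Ω) :
    (c : EReal) < eMax Ω σ := by
  -- If `e_max = c`, then `a_σ(e) ≤ a_σ(c) < meas Ω` for `e < c`, against `a_σ(e) → meas Ω`.
  have hle : (c : EReal) ≤ eMax Ω σ := le_sSup hc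
  refine hle.lt_of_ne fun heq ↦ ?_
  have hcoe : Tendsto (fun e : ℝ ↦ (e : EReal)) (𝓝[<] c) (𝓝[<] (c : EReal)) :=
    tendsto_nhdsWithin_of_tendsto_nhds_of_eventually_within _
      ((continuous_coe_real_ereal.tendsto c).mono_left nhdsWithin_le_nhds)
      (eventually_nhdsWithin_of_forall fun _ he ↦ EReal.coe_lt_coe_iff.2 he)
  have hlim := hσ.tendsto_eMax
  rw [← heq] at hlim
  replace hlim := hlim.mono_left hcoe.le_comap
  have hmono : ∀ᶠ e : ℝ in 𝓝[<] c, aSig Ω σ e ≤ aSig Ω σ c :=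
    eventually_nhdsWithin_of_forall fun _ he ↦ monotone_aSig_coe (le_of_lt he)
  exact (le_of_tendsto hlim hmono).not_gt hc

theorem volume_setOf_le (hσ : SigAdmissible Ω σ) {c : ℝ} (hc : (c : EReal) < eMax Ω σ) :
    volume {x | x ∈ Ω ∧ σ x ≤ c} = aSig Ω σ c := by
  have hsplit : {x | x ∈ Ω ∧ σ x ≤ c} = {x | x ∈ Ω ∧ σ x < c} ∪ {x | x ∈ Ω ∧ σ x = c} := by
    ext x
    simp only [mem_union, mem_ofPred_eq, le_iff_lt_or_eq, and_or_left]
  refine le_antisymm ?_ (aSig_coe c ▸ measure_mono fun x hx ↦ ⟨hx.1, hx.2.le⟩)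
  calc volume {x | x ∈ Ω ∧ σ x ≤ c}
      ≤ volume {x | x ∈ Ω ∧ σ x < c} + volume {x | x ∈ Ω ∧ σ x = c} :=
        hsplit ▸ measure_union_le _ _
    _ = aSig Ω σ c := by rw [hσ.levelSets c hc, add_zero, aSig_coe]

theorem le_aSig_of_forall_gt (hσ : SigAdmissible Ω σ) {c : ℝ} {m : ℝ≥0∞}
    (hc : (c : EReal) < eMax Ω σ)
    (h : ∀ e : ℝ, c < e → m ≤ aSig Ω σ e) : m ≤ aSig Ω σ c := by
  obtain ⟨e₁, hce₁, he₁⟩ := exists_gt_aSig_lt_volume hc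
  have hinter : ⋂ e > c, {x | x ∈ Ω ∧ σ x < e} = {x | x ∈ Ω ∧ σ x ≤ c} := by
    ext x
    simp only [mem_iInter, mem_ofPred_eq]
    refine ⟨fun hx ↦ ⟨(hx e₁ hce₁).1, le_of_forall_gt fun e he ↦ (hx e he).2⟩,
      fun hx e he ↦ ⟨hx.1, hx.2.trans_lt he⟩⟩
  have hlim : Tendsto (fun e : ℝ ↦ aSig Ω σ e) (𝓝[>] c) (𝓝 (aSig Ω σ c)) := by
    rw [← hσ.volume_setOf_le hc, ← hinter]
    simpa only [aSig_coe, Function.comp_def] using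
      tendsto_measure_biInter_gt (μ := volume)
        (fun e _ ↦ (hσ.measurableSet_setOf_lt e).nullMeasurableSet)
        (fun _ _ _ hij ↦ monotone_setOf_lt hij) ⟨e₁, hce₁, aSig_coe (Ω := Ω) e₁ ▸ he₁.ne_top⟩
  exact ge_of_tendsto hlim (eventually_nhdsWithin_of_forall h)

theorem exists_aSig_lt (hσ : SigAdmissible Ω σ) {m : ℝ≥0∞} (hm : 0 < m) :
    ∃ e : ℝ, aSig Ω σ e < m := by
  obtain ⟨e₀, he₀⟩ := hσ.exists_lt
  have hinter : ⋂ e : ℝ, {x | x ∈ Ω ∧ σ x < e} = ∅ :=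
    eq_empty_of_forall_notMem fun x hx ↦ (mem_iInter.1 hx (σ x)).2.false
  have hlim : Tendsto (fun e : ℝ ↦ aSig Ω σ e) atBot (𝓝 0) := by
    simpa only [aSig_coe, hinter, measure_empty, Function.comp_def] using
      tendsto_measure_iInter_atBot (μ := volume)
        (fun e ↦ (hσ.measurableSet_setOf_lt e).nullMeasurableSet) monotone_setOf_lt
        ⟨e₀, aSig_coe (Ω := Ω) e₀ ▸ he₀.ne_top⟩
  exact (hlim.eventually_lt_const hm).exists

theorem measurableSet_sigSublevel (hσ : SigAdmissible Ω σ) (m : ℝ≥0∞) :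
    MeasurableSet (sigSublevel Ω σ m) :=
  hσ.measurableSet_Ω.inter
    (measurableSet_lt (monotone_aSig_coe.measurable.comp hσ.measurable_σ) measurable_const)

theorem exists_threshold (hσ : SigAdmissible Ω σ) {m : ℝ≥0∞} (hm0 : 0 < m)
    (hm : m < volume Ω) :
    ∃ c : ℝ, aSig Ω σ c = m ∧ {x | x ∈ Ω ∧ σ x < c} ⊆ sigSublevel Ω σ m ∧
      sigSublevel Ω σ m ⊆ {x | x ∈ Ω ∧ σ x ≤ c} := by
  set T := {e : ℝ | aSig Ω σ e < m}
  set c : ℝ := sSup T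
  have hT : T.Nonempty := hσ.exists_aSig_lt hm0
  have hTbdd : BddAbove T := bddAbove_setOf_aSig_lt hm
  have hlt : ∀ e < c, aSig Ω σ e < m := fun e he ↦
    let ⟨_, he'T, hee'⟩ := exists_lt_of_lt_csSup hT he
    (monotone_aSig_coe hee'.le).trans_lt he'T
  have hle : aSig Ω σ c ≤ m := aSig_le_of_forall_lt fun e he ↦ (hlt e he).le
  have hge : m ≤ aSig Ω σ c :=
    hσ.le_aSig_of_forall_gt (hσ.coe_lt_eMax (hle.trans_lt hm))
      fun e he ↦ not_lt.1 fun h ↦ (le_csSup hTbdd h).not_gt he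
  exact ⟨c, le_antisymm hle hge, fun x hx ↦ ⟨hx.1, hlt _ hx.2⟩,
    fun x hx ↦ ⟨hx.1, le_csSup hTbdd hx.2⟩⟩

theorem volume_sigSublevel (hσ : SigAdmissible Ω σ) {m : ℝ≥0∞} (hm : m < volume Ω) :
    volume (sigSublevel Ω σ m) = m := by
  rcases eq_zero_or_pos m with rfl | hm0
  · simp [sigSublevel]
  obtain ⟨c, hc, hlt, hle⟩ := hσ.exists_threshold hm0 hm
  refine le_antisymm ?_ ?_
  · calc volume (sigSublevel Ω σ m) ≤ volume {x | x ∈ Ω ∧ σ x ≤ c} := measure_mono hle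
      _ = m := (hσ.volume_setOf_le (hσ.coe_lt_eMax (hc ▸ hm))).trans hc
  · calc m = volume {x | x ∈ Ω ∧ σ x < c} := hc ▸ aSig_coe c
      _ ≤ volume (sigSublevel Ω σ m) := measure_mono hlt

theorem measureReal_sigSublevel_sdiff (hσ : SigAdmissible Ω σ) {x y : ℝ} (hx : 0 ≤ x)
    (hxy : x ≤ y) (hy : ENNReal.ofReal y < volume Ω) :
    volume.real (sigSublevel Ω σ (ENNReal.ofReal y) \ sigSublevel Ω σ (ENNReal.ofReal x)) =
      y - x := by
  have hx' : ENNReal.ofReal x < volume Ω := (ENNReal.ofReal_le_ofReal hxy).trans_lt hy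
  rw [measureReal_sdiff (sigSublevel_mono (ENNReal.ofReal_le_ofReal hxy))
      (hσ.measurableSet_sigSublevel _) ((hσ.volume_sigSublevel hy).trans_ne ENNReal.ofReal_ne_top),
    measureReal_def, measureReal_def, hσ.volume_sigSublevel hy, hσ.volume_sigSublevel hx',
    ENNReal.toReal_ofReal (hx.trans hxy), ENNReal.toReal_ofReal hx]

theorem BSig_sub_le_mul (hσ : SigAdmissible Ω σ) (hB : BSigFinite Ω σ) {x y c : ℝ}
    (hx : 0 ≤ x) (hxy : x ≤ y) (hy : ENNReal.ofReal y < volume Ω)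
    (h : ∀ p ∈ sigSublevel Ω σ (ENNReal.ofReal y), σ p ≤ c) :
    BSig Ω σ y - BSig Ω σ x ≤ c * (y - x) :=
  hσ.measureReal_sigSublevel_sdiff hx hxy hy ▸
    setIntegral_sub_le_mul_of_le (sigSublevel_mono (ENNReal.ofReal_le_ofReal hxy))
      (hσ.measurableSet_sigSublevel _) (hσ.measurableSet_sigSublevel _)
      ((hσ.volume_sigSublevel hy).trans_ne ENNReal.ofReal_ne_top) (hB y (hx.trans hxy) hy)
      fun p hp ↦ h p hp.1

theorem mul_le_BSig_sub (hσ : SigAdmissible Ω σ) (hB : BSigFinite Ω σ) {y z c : ℝ}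
    (hy : 0 ≤ y) (hyz : y ≤ z) (hz : ENNReal.ofReal z < volume Ω)
    (h : ∀ p ∈ Ω \ sigSublevel Ω σ (ENNReal.ofReal y), c ≤ σ p) :
    c * (z - y) ≤ BSig Ω σ z - BSig Ω σ y :=
  hσ.measureReal_sigSublevel_sdiff hy hyz hz ▸
    mul_le_setIntegral_sub_of_le (sigSublevel_mono (ENNReal.ofReal_le_ofReal hyz))
      (hσ.measurableSet_sigSublevel _) (hσ.measurableSet_sigSublevel _)
      ((hσ.volume_sigSublevel hz).trans_ne ENNReal.ofReal_ne_top) (hB z (hy.trans hyz) hz)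
      fun p hp ↦ h p ⟨hp.1.1, hp.2⟩

end SigAdmissible

end Rearrangement

/-- (Theorem 1 i)): if `σ` is admissible and `B_σ(μ)` is finite for all
`μ ∈ [0, meas Ω)`, then `B_σ` is convex on `[0, meas Ω)`. -/
theorem BSig_convexOn {d : ℕ} (Ω : Set (EuclideanSpace ℝ (Fin d)))
    (σ : EuclideanSpace ℝ (Fin d) → ℝ) (hσ : SigAdmissible Ω σ) (hB : BSigFinite Ω σ) :
    ConvexOn ℝ {μ : ℝ | 0 ≤ μ ∧ ENNReal.ofReal μ < volume Ω} (BSig Ω σ) := by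
  have hconv : Convex ℝ {μ : ℝ | 0 ≤ μ ∧ ENNReal.ofReal μ < volume Ω} :=
    convex_iff_ordConnected.2
      ⟨fun _ ha _ hb _ ht ↦ ⟨ha.1.trans ht.1, (ENNReal.ofReal_le_ofReal ht.2).trans_lt hb.2⟩⟩
  refine convexOn_of_slope_mono_adjacent hconv fun {x y z} hx hz hxy hyz ↦ ?_
  have hy : 0 ≤ y ∧ ENNReal.ofReal y < volume Ω :=
    hconv.ordConnected.out hx hz ⟨hxy.le, hyz.le⟩
  obtain ⟨c, -, hlt, hle⟩ :=
    hσ.exists_threshold (ENNReal.ofReal_pos.2 (hx.1.trans_lt hxy)) hy.2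
  calc (BSig Ω σ y - BSig Ω σ x) / (y - x) ≤ c := by
        rw [div_le_iff₀ (sub_pos.2 hxy)]
        exact hσ.BSig_sub_le_mul hB hx.1 hxy.le hy.2 fun p hp ↦ (hle hp).2
    _ ≤ (BSig Ω σ z - BSig Ω σ y) / (z - y) := by
        rw [le_div_iff₀ (sub_pos.2 hyz)]
        exact hσ.mul_le_BSig_sub hB hy.1 hyz.le hz.2 fun p hp ↦
          not_lt.1 fun h ↦ hp.2 (hlt ⟨hp.1, h⟩)
end

section
/- Let σ be a measurable function on a domain Ω ⊂ ℝ^d (d ≥ 1) satisfying the admissibility assumptions for σ-rearrangements. Then the level sets of the composed function a_σ ∘ σ are of zero measure on {σ < e_max}: for every μ ≥ 0, meas{x ∈ Ω : a_σ(σ(x)) = μ and σ(x) < e_max} = 0. -/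
open MeasureTheory Set Filter Metric
open scoped ENNReal NNReal

/-!
Push `volume` on `Ω` forward along `σ` to a measure `ν` on `ℝ`, so that `a_σ(e) = ν (Iio e)`
and the set in question is `σ⁻¹' E ∩ Ω` with `E = {e < e_max | ν (Iio e) = μ}`. For `a ≤ b` in
`E` the finite value `μ` is attained at both ends, so `ν [a, b) = 0`, and `ν {b} = 0` because
level sets below `e_max` are null; hence `ν [a, b] = 0`. Every point of `E` has a neighbourhood
in `E` inside such an interval, and second countability of `ℝ` makes `E` itself `ν`-null.
-/

open Topology

section LinearOrder

variable {α : Type*} [TopologicalSpace α] [LinearOrder α] [OrderTopology α]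

theorem exists_le_eventually_nhdsWithin {s : Set α} {x : α} (hx : x ∈ s) :
    ∃ a ∈ s, ∀ᶠ y in 𝓝[s] x, a ≤ y := by
  by_cases h : ∃ a ∈ s, a < x
  · obtain ⟨a, ha, hax⟩ := h
    exact ⟨a, ha, eventually_nhdsWithin_of_eventually_nhds
      ((eventually_gt_nhds hax).mono fun _ => le_of_lt)⟩
  · push Not at h
    exact ⟨x, hx, eventually_nhdsWithin_of_forall h⟩

theorem exists_ge_eventually_nhdsWithin {s : Set α} {x : α} (hx : x ∈ s) :
    ∃ b ∈ s, ∀ᶠ y in 𝓝[s] x, y ≤ b :=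
  exists_le_eventually_nhdsWithin (α := αᵒᵈ) hx

variable [SecondCountableTopology α] [MeasurableSpace α]

theorem measure_null_of_Icc_null {ν : Measure α} {s : Set α}
    (h : ∀ a ∈ s, ∀ b ∈ s, a ≤ b → ν (Icc a b) = 0) : ν s = 0 := by
  refine measure_null_of_locally_null s fun x hx => ?_
  obtain ⟨a, ha, hax⟩ := exists_le_eventually_nhdsWithin hx
  obtain ⟨b, hb, hxb⟩ := exists_ge_eventually_nhdsWithin hx
  have hIcc : Icc a b ∈ 𝓝[s] x := hax.and hxb
  obtain ⟨hax, hxb⟩ := (hax.and hxb).self_of_nhdsWithin hx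
  exact ⟨Icc a b, hIcc, h a ha b hb (hax.trans hxb)⟩

end LinearOrder

theorem measure_Icc_eq_zero_of_measure_Iio_eq {α : Type*} [TopologicalSpace α] [LinearOrder α]
    [OrderClosedTopology α] [MeasurableSpace α] [OpensMeasurableSpace α] {ν : Measure α}
    {a b : α} (hab : a ≤ b) (hIio : ν (Iio a) = ν (Iio b)) (hfin : ν (Iio b) ≠ ⊤)
    (hb : ν {b} = 0) : ν (Icc a b) = 0 := by
  refine nonpos_iff_eq_zero.mp (ENNReal.le_of_add_le_add_right hfin ?_)
  calc ν (Icc a b) + ν (Iio b)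
      = ν (Iio a ∪ Icc a b) := by
        rw [← hIio, add_comm, measure_union
          ((Iio_disjoint_Ici le_rfl).mono_right Icc_subset_Ici_self) measurableSet_Icc]
    _ = ν (Iio b ∪ {b}) := by rw [Iio_union_Icc_eq_Iic hab, Iio_union_right]
    _ ≤ 0 + ν (Iio b) := (measure_union_le _ _).trans_eq (by rw [hb, add_zero, zero_add])

section Jacobian

variable {d : ℕ} {Ω : Set (EuclideanSpace ℝ (Fin d))} {σ : EuclideanSpace ℝ (Fin d) → ℝ}

theorem aSig_mono : Monotone (aSig Ω σ) :=
  fun _ _ hee' => measure_mono fun _ hx => ⟨hx.1, hx.2.trans_le hee'⟩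

theorem aSig_lt_volume_of_lt_eMax {e : EReal} (he : e < eMax Ω σ) : aSig Ω σ e < volume Ω := by
  obtain ⟨e', he', hee'⟩ := lt_sSup_iff.mp he
  exact (aSig_mono hee'.le).trans_lt he'

variable (hΩ : MeasurableSet Ω) (hσ : Measurable σ)
include hΩ hσ

theorem aSig_coe_eq_map_Iio (e : ℝ) :
    aSig Ω σ e = (volume.restrict Ω).map σ (Iio e) := by
  rw [aSig, Measure.map_apply hσ measurableSet_Iio, Measure.restrict_apply' hΩ]
  congr 1
  ext x
  simp [and_comm]

theorem map_singleton_eq_volume_levelSet (e : ℝ) :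
    (volume.restrict Ω).map σ {e} = volume {x | x ∈ Ω ∧ σ x = e} := by
  rw [Measure.map_apply hσ (measurableSet_singleton e), Measure.restrict_apply' hΩ]
  congr 1
  ext x
  simp [and_comm]

end Jacobian

/-- (Lemma on `a_σ`, item iii)): the level sets of `a_σ ∘ σ` on
`{σ < e_max}` have zero measure. -/
theorem aSig_comp_levelSets {d : ℕ} (Ω : Set (EuclideanSpace ℝ (Fin d)))
    (σ : EuclideanSpace ℝ (Fin d) → ℝ) (hσ : SigAdmissible Ω σ) :
    ∀ μ : ℝ≥0∞,
      volume {x | x ∈ Ω ∧ aSig Ω σ (σ x : EReal) = μ ∧ (σ x : EReal) < eMax Ω σ} = 0 := by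
  intro μ
  set ν := (volume.restrict Ω).map σ
  have haSig := aSig_coe_eq_map_Iio hσ.measurableSet_Ω hσ.measurable_σ
  set E := {e : ℝ | (e : EReal) < eMax Ω σ ∧ aSig Ω σ e = μ}
  have hE : ν E = 0 := by
    refine measure_null_of_Icc_null fun a ha b hb hab => ?_
    refine measure_Icc_eq_zero_of_measure_Iio_eq hab ?_ ?_ ?_
    · rw [← haSig, ← haSig, ha.2, hb.2]
    · exact haSig b ▸ (aSig_lt_volume_of_lt_eMax hb.1).ne_top
    · rw [map_singleton_eq_volume_levelSet hσ.measurableSet_Ω hσ.measurable_σ]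
      exact hσ.levelSets b hb.1
  refine nonpos_iff_eq_zero.mp ?_
  calc volume {x | x ∈ Ω ∧ aSig Ω σ (σ x : EReal) = μ ∧ (σ x : EReal) < eMax Ω σ}
      ≤ volume (σ ⁻¹' E ∩ Ω) := measure_mono fun x ⟨hx, ha, hlt⟩ => ⟨⟨hlt, ha⟩, hx⟩
    _ = volume.restrict Ω (σ ⁻¹' E) := (Measure.restrict_apply' hσ.measurableSet_Ω).symm
    _ ≤ ν E := Measure.le_map_apply hσ.measurable_σ.aemeasurable E
    _ = 0 := hE
end
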